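/- arXiv:1002.1104 — 2 statements merged into one kernel-verified Lean document; each statement's English description precedes it below -/
import Mathlib

section
/- (Benjamini–Yekutieli) Let m ≥ 1 and let P_1, …, P_m be random variables with values in [0,1] (p-values), and let T ⊆ {1,…,m} be the set of indices of true null hypotheses, such that for every i ∈ T and every u ∈ [0,1], Pr(P_i ≤ u) ≤ u. Fix β ∈ (0,1). Let P_{(1)} ≤ … ≤ P_{(m)} be the order statistics of P_1,…,P_m, let ℓ = max{ i ≥ 0 : P_{(i)} ≤ (i · β)/(m · Σ_{j=1}^{m} 1/j) } (with ℓ = 0 if no i ≥ 1 satisfies the inequality), and reject the null hypotheses corresponding to the ℓ smallest p-values. Let R = ℓ and let V be the number of rejected indices belonging to T. Then E[(V/R) · 1_{R > 0}] ≤ β. -/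
/-!
Fix a true null `i` and write `t_k = kβ/(m H_m)`. Its contribution `1[P_i ≤ t_R] / R` to the
false discovery proportion is bounded, whatever the value `k = R ≥ 1`, by the envelope
`g(P_i) = ∑_{l=1}^m w_l 1[P_i ≤ t_l]`, where the weights `w_l ≥ 0` satisfy
`∑_{l=k}^m w_l = 1/k`. The envelope no longer involves `R`, which is why no dependence
assumption is needed: by super-uniformity
`E g(P_i) ≤ ∑_l w_l t_l = β/(m H_m) · ∑_l l w_l = β/m`, because
`∑_l l w_l = ∑_k ∑_{l ≥ k} w_l = H_m`. Summing over the at most `m` true nulls gives `β`.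
-/

open MeasureTheory Finset

noncomputable section

namespace BY

/-- The harmonic sum `Σ_{j=1}^{m} 1/j`. -/
def harm (m : ℕ) : ℝ := ∑ j ∈ Finset.Icc 1 m, (1 : ℝ) / j

/-- The Benjamini–Yekutieli rejection threshold for rank `i`: `(i·β)/(m·Σ_{j=1}^m 1/j)`. -/
def thr (m : ℕ) (β : ℝ) (i : ℕ) : ℝ := (i : ℝ) * β / ((m : ℝ) * harm m)

/-- The number `ℓ = R` of rejected hypotheses:
`ℓ = max{ i ≥ 0 : P_{(i)} ≤ (i·β)/(m·Σ_{j=1}^m 1/j) }` (with `ℓ = 0` if no `i ≥ 1`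
satisfies the inequality). Since the `i`-th order statistic satisfies `P_{(i)} ≤ u` iff at
least `i` of the p-values are `≤ u`, this maximum is expressed via counting. -/
def numRejected {Ω : Type*} {m : ℕ} (P : Fin m → Ω → ℝ) (β : ℝ) (ω : Ω) : ℕ :=
  sSup {i | i ≤ m ∧ i ≤ (Finset.univ.filter fun j => P j ω ≤ thr m β i).card}

/-- The number `V` of rejected true null hypotheses: the rejected hypotheses are those with
the `ℓ` smallest p-values, i.e. those `j` with `P_j ≤ thr m β ℓ`. -/
def numFalse {Ω : Type*} {m : ℕ} (P : Fin m → Ω → ℝ) (T : Finset (Fin m)) (β : ℝ)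
    (ω : Ω) : ℕ :=
  (T.filter fun j => P j ω ≤ thr m β (numRejected P β ω)).card

lemma harm_pos {m : ℕ} (hm : m ≠ 0) : 0 < harm m :=
  sum_pos (fun j hj => by have := (mem_Icc.1 hj).1; positivity)
    (nonempty_Icc.2 (Nat.one_le_iff_ne_zero.2 hm))

lemma harm_nonneg (m : ℕ) : 0 ≤ harm m :=
  sum_nonneg fun _ _ => by positivity

lemma thr_nonneg {m : ℕ} {β : ℝ} (hβ : 0 ≤ β) (i : ℕ) : 0 ≤ thr m β i := by
  have := harm_nonneg m
  unfold thr; positivity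

lemma thr_mono {m : ℕ} {β : ℝ} (hβ : 0 ≤ β) : Monotone (thr m β) := by
  intro i i' h
  have := harm_nonneg m
  unfold thr
  gcongr

lemma thr_le_one {m : ℕ} {β : ℝ} (hβ0 : 0 ≤ β) (hβ1 : β ≤ 1) {i : ℕ}
    (hi : i ∈ Icc 1 m) : thr m β i ≤ 1 := by
  obtain ⟨hi1, him⟩ := mem_Icc.1 hi
  have hm : m ≠ 0 := by omega
  have h1_le_harm : 1 ≤ harm m := by
    simpa [harm] using single_le_sum (f := fun j : ℕ => (1 : ℝ) / j)
      (fun j _ => by positivity) (mem_Icc.2 ⟨le_rfl, Nat.one_le_iff_ne_zero.2 hm⟩)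
  calc thr m β i ≤ thr m β m := thr_mono hβ0 him
    _ = β / harm m := by unfold thr; field_simp
    _ ≤ 1 := by rw [div_le_one (by linarith)]; linarith

/-- From the telescoping sum `1/k = ∑_{l=k}^{m-1} (1/l - 1/(l+1)) + 1/m`. -/
def weight (m l : ℕ) : ℝ := if l < m then ((l : ℝ) * (l + 1))⁻¹ else (l : ℝ)⁻¹

lemma weight_nonneg (m l : ℕ) : 0 ≤ weight m l := by
  unfold weight; split_ifs <;> positivity

lemma sum_weight_Icc {m k : ℕ} (hk : 1 ≤ k) (hkm : k ≤ m) :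
    ∑ l ∈ Icc k m, weight m l = (k : ℝ)⁻¹ := by
  induction hkm using Nat.decreasingInduction with
  | self => simp [weight]
  | of_succ k hkm ih =>
    rw [← insert_Icc_add_one_left_eq_Icc hkm.le, sum_insert (by simp),
      ih (by omega), weight, if_pos hkm]
    have : (k : ℝ) ≠ 0 := by positivity
    field_simp
    push_cast
    ring

lemma sum_natCast_mul_weight (m : ℕ) :
    ∑ l ∈ Icc 1 m, (l : ℝ) * weight m l = harm m := by
  calc ∑ l ∈ Icc 1 m, (l : ℝ) * weight m l
      = ∑ l ∈ Icc 1 m, ∑ _k ∈ Icc 1 l, weight m l := by simp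
    _ = ∑ k ∈ Icc 1 m, ∑ l ∈ Icc k m, weight m l :=
      sum_comm' (by intro l k; simp only [mem_Icc]; omega)
    _ = harm m := sum_congr rfl fun k hk => by
      rw [sum_weight_Icc (mem_Icc.1 hk).1 (mem_Icc.1 hk).2, one_div]

lemma sum_weight_mul_thr (m : ℕ) (β : ℝ) :
    ∑ l ∈ Icc 1 m, weight m l * thr m β l = β / m := by
  rcases eq_or_ne m 0 with rfl | hm
  · simp
  have := harm_pos hm
  calc ∑ l ∈ Icc 1 m, weight m l * thr m β l
      = (∑ l ∈ Icc 1 m, (l : ℝ) * weight m l) * (β / (m * harm m)) := by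
        rw [sum_mul]
        exact sum_congr rfl fun l _ => by unfold thr; ring
    _ = β / m := by rw [sum_natCast_mul_weight]; field_simp

def envelope (m : ℕ) (β p : ℝ) : ℝ :=
  ∑ l ∈ Icc 1 m, (Set.Iic (thr m β l)).indicator (fun _ => weight m l) p

lemma envelope_nonneg (m : ℕ) (β p : ℝ) : 0 ≤ envelope m β p :=
  sum_nonneg fun l _ => Set.indicator_nonneg (fun _ _ => weight_nonneg m l) p

lemma inv_le_envelope {m k : ℕ} {β p : ℝ} (hβ : 0 ≤ β) (hk : 1 ≤ k) (hkm : k ≤ m)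
    (hp : p ≤ thr m β k) : (k : ℝ)⁻¹ ≤ envelope m β p := by
  rw [← sum_weight_Icc hk hkm]
  calc ∑ l ∈ Icc k m, weight m l
      = ∑ l ∈ Icc k m, (Set.Iic (thr m β l)).indicator (fun _ => weight m l) p :=
        sum_congr rfl fun l hl => by
          have : p ≤ thr m β l := hp.trans (thr_mono hβ (mem_Icc.1 hl).1)
          rw [Set.indicator_of_mem (Set.mem_Iic.2 this)]
    _ ≤ envelope m β p :=
        sum_le_sum_of_subset_of_nonneg (Icc_subset_Icc_left hk)
          fun l _ _ => Set.indicator_nonneg (fun _ _ => weight_nonneg m l) p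

lemma card_filter_div_le_sum_envelope {ι : Type*} {m k : ℕ} {β : ℝ} (hβ : 0 ≤ β)
    (hk : 1 ≤ k) (hkm : k ≤ m) (T : Finset ι) (p : ι → ℝ) :
    ((T.filter fun i => p i ≤ thr m β k).card : ℝ) / k ≤
      ∑ i ∈ T, envelope m β (p i) := by
  rw [card_filter, Nat.cast_sum, sum_div]
  refine sum_le_sum fun i _ => ?_
  split_ifs with hp
  · simpa using inv_le_envelope hβ hk hkm hp
  · simpa using envelope_nonneg m β (p i)

lemma numRejected_le {Ω : Type*} {m : ℕ} (P : Fin m → Ω → ℝ) (β : ℝ) (ω : Ω) :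
    numRejected P β ω ≤ m :=
  csSup_le ⟨0, by simp⟩ fun _ hi => hi.1

lemma fdp_le_sum_envelope {Ω : Type*} {m : ℕ} (P : Fin m → Ω → ℝ) (T : Finset (Fin m))
    {β : ℝ} (hβ : 0 ≤ β) (ω : Ω) :
    Set.indicator {ω' | 0 < numRejected P β ω'}
        (fun ω' => (numFalse P T β ω' : ℝ) / (numRejected P β ω' : ℝ)) ω
      ≤ ∑ i ∈ T, envelope m β (P i ω) := by
  by_cases hR : 0 < numRejected P β ω
  · rw [Set.indicator_of_mem (s := {ω' | 0 < numRejected P β ω'}) hR]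
    exact card_filter_div_le_sum_envelope hβ hR (numRejected_le P β ω) T (P · ω)
  · rw [Set.indicator_of_notMem (s := {ω' | 0 < numRejected P β ω'}) hR]
    exact sum_nonneg fun i _ => envelope_nonneg m β (P i ω)

section Integral

variable {Ω : Type*} [MeasurableSpace Ω] {μ : Measure Ω} [IsFiniteMeasure μ] {X : Ω → ℝ}

lemma integral_envelope_comp (hX : Measurable X) (m : ℕ) (β : ℝ) :
    ∫ ω, envelope m β (X ω) ∂μ =
      ∑ l ∈ Icc 1 m, μ.real {ω | X ω ≤ thr m β l} * weight m l := by
  unfold envelope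
  rw [integral_finsetSum _ fun l _ => (integrable_const _).indicator (hX measurableSet_Iic)]
  exact sum_congr rfl fun l _ => integral_indicator_const (weight m l) (hX measurableSet_Iic)

lemma integrable_envelope_comp (hX : Measurable X) (m : ℕ) (β : ℝ) :
    Integrable (fun ω => envelope m β (X ω)) μ :=
  integrable_finsetSum _ fun l _ =>
    (integrable_const (weight m l)).indicator (hX measurableSet_Iic)

lemma integral_envelope_comp_le (hX : Measurable X)
    (hXu : ∀ u ∈ Set.Icc (0 : ℝ) 1, μ {ω | X ω ≤ u} ≤ ENNReal.ofReal u)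
    (m : ℕ) {β : ℝ} (hβ0 : 0 ≤ β) (hβ1 : β ≤ 1) :
    ∫ ω, envelope m β (X ω) ∂μ ≤ β / m := by
  rw [integral_envelope_comp hX, ← sum_weight_mul_thr m β]
  refine sum_le_sum fun l hl => ?_
  rw [mul_comm]
  gcongr
  · exact weight_nonneg m l
  · exact ENNReal.toReal_le_of_le_ofReal (thr_nonneg hβ0 l)
      (hXu _ ⟨thr_nonneg hβ0 l, thr_le_one hβ0 hβ1 hl⟩)

end Integral

theorem benjamini_yekutieli_general
    {Ω : Type*} [MeasurableSpace Ω] (μ : Measure Ω) [IsProbabilityMeasure μ]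
    (m : ℕ)
    (P : Fin m → Ω → ℝ)
    (hPmeas : ∀ i, Measurable (P i))
    (T : Finset (Fin m))
    (hT : ∀ i ∈ T, ∀ u ∈ Set.Icc (0 : ℝ) 1, μ {ω | P i ω ≤ u} ≤ ENNReal.ofReal u)
    (β : ℝ) (hβ : β ∈ Set.Ioo (0 : ℝ) 1) :
    ∫ ω, Set.indicator {ω' | 0 < numRejected P β ω'}
        (fun ω' => (numFalse P T β ω' : ℝ) / (numRejected P β ω' : ℝ)) ω ∂μ ≤ β := by
  obtain ⟨hβ0, hβ1⟩ := hβ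
  have hT_card : (T.card : ℝ) / m ≤ 1 :=
    div_le_one_of_le₀ (by exact_mod_cast (card_le_univ T).trans_eq (Fintype.card_fin m))
      (Nat.cast_nonneg m)
  calc _ ≤ ∫ ω, ∑ i ∈ T, envelope m β (P i ω) ∂μ :=
        integral_mono_of_nonneg (ae_of_all _ fun ω => Set.indicator_nonneg
            (fun _ _ => by positivity) ω)
          (integrable_finsetSum _ fun i _ => integrable_envelope_comp (hPmeas i) m β)
          (ae_of_all _ (fdp_le_sum_envelope P T hβ0.le))
    _ = ∑ i ∈ T, ∫ ω, envelope m β (P i ω) ∂μ :=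
        integral_finsetSum _ fun i _ => integrable_envelope_comp (hPmeas i) m β
    _ ≤ ∑ _i ∈ T, β / m :=
        sum_le_sum fun i hi =>
          integral_envelope_comp_le (hPmeas i) (hT i hi) m hβ0.le hβ1.le
    _ = β * (T.card / m) := by rw [sum_const, nsmul_eq_mul]; ring
    _ ≤ β := mul_le_of_le_one_right hβ0.le hT_card

/-- **Benjamini–Yekutieli.** Let `P_1, …, P_m` be p-values, `T` the set of true null
hypotheses, with `Pr(P_i ≤ u) ≤ u` for every `i ∈ T` and `u ∈ [0,1]`, and `β ∈ (0,1)`.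
Rejecting the null hypotheses corresponding to the `ℓ` smallest p-values, where
`ℓ = max{ i ≥ 0 : P_{(i)} ≤ (i·β)/(m·Σ_{j=1}^m 1/j) }`, and letting `R = ℓ` and `V` be the
number of rejected indices in `T`, we have `E[(V/R)·1_{R>0}] ≤ β` — under arbitrary
dependence of the p-values. -/
theorem benjamini_yekutieli
    {Ω : Type*} [MeasurableSpace Ω] (μ : Measure Ω) [IsProbabilityMeasure μ]
    (m : ℕ) (hm : 1 ≤ m)
    (P : Fin m → Ω → ℝ)
    (hPmeas : ∀ i, Measurable (P i))
    (hP01 : ∀ i ω, P i ω ∈ Set.Icc (0 : ℝ) 1)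
    (T : Finset (Fin m))
    (hT : ∀ i ∈ T, ∀ u ∈ Set.Icc (0 : ℝ) 1, μ {ω | P i ω ≤ u} ≤ ENNReal.ofReal u)
    (β : ℝ) (hβ : β ∈ Set.Ioo (0 : ℝ) 1) :
    ∫ ω, Set.indicator {ω' | 0 < numRejected P β ω'}
        (fun ω' => (numFalse P T β ω' : ℝ) / (numRejected P β ω' : ℝ)) ω ∂μ ≤ β :=
  benjamini_yekutieli_general μ m P hPmeas T hT β hβ

end BY
end
end

section
/- Fix integers k ≥ 2 and s ≥ 2, constants γ > 0 and 0 < c ≤ (k−1)(1−1/s), and consider for each n the random dataset model with common item probability p = γ/n and t = t(n) transactions with t(n) = O(n^c). Then as n → ∞, b_1(s) + b_2(s) = O(1/n^{2s−2}). -/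
/-!
If `Z_X = 1`, some `s`-set `S` of transactions all contain `X`, so by the union bound
`p_X ≤ C(t, s) p^{sk}`; likewise `E[Z_X Z_Y] ≤ ∑_{S,T} p^{|S×X ∪ T×Y|}`, where
`|S×X ∪ T×Y| = 2sk - |S∩T| |X∩Y|`. Grouping the pairs by `i = |X∩Y| ∈ [1, k-1]` and
`r = |S∩T| ∈ [0, s]`, with at most `2^k n^{k-i}` (resp. `2^s t^{s-r}`) choices of the second
member, bounds `b₂` by a constant times `∑ n^{2k-i} t^{2s-r} p^{2sk-ri}`, and `b₁` by the term
`i = r = 0`. For `p = γ/n` and `t = O(n^c)` each term is `O(n^e)` with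
`e = 2k - i + c(2s - r) - 2sk + ri`, and `c ≤ (k-1)(1-1/s)` gives `e ≤ 2 - 2s`.
-/

open MeasureTheory ProbabilityTheory Finset Filter Asymptotics

noncomputable section

namespace PaperModel

variable {Ω : Type*}

/-- Support of itemset `X` in the dataset given by the Bernoulli family `A`. -/
def support {n t : ℕ} (A : Fin t → Fin n → Ω → Bool) (X : Finset (Fin n)) (ω : Ω) : ℕ :=
  (Finset.univ.filter fun j => ∀ i ∈ X, A j i ω = true).card

/-- Indicator `Z_X` of the event that the support of `X` is at least `s`. -/
def Z {n t : ℕ} (A : Fin t → Fin n → Ω → Bool) (s : ℕ) (X : Finset (Fin n)) (ω : Ω) : ℝ :=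
  if s ≤ support A X ω then 1 else 0

/-- `Q̂_{k,s}`: the number of `k`-itemsets with support at least `s`. -/
def Qhat {n t : ℕ} (A : Fin t → Fin n → Ω → Bool) (k s : ℕ) (ω : Ω) : ℕ :=
  ((Finset.univ.powersetCard k).filter fun X => s ≤ support A X ω).card

/-- `p_X = Pr(Z_X = 1)`. -/
def pX [MeasurableSpace Ω] (μ : Measure Ω) {n t : ℕ} (A : Fin t → Fin n → Ω → Bool)
    (s : ℕ) (X : Finset (Fin n)) : ℝ :=
  (μ {ω | s ≤ support A X ω}).toReal

/-- `E[Z_X Z_Y] = Pr(Z_X = 1 ∧ Z_Y = 1)`. -/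
def pXY [MeasurableSpace Ω] (μ : Measure Ω) {n t : ℕ} (A : Fin t → Fin n → Ω → Bool)
    (s : ℕ) (X Y : Finset (Fin n)) : ℝ :=
  (μ ({ω | s ≤ support A X ω} ∩ {ω | s ≤ support A Y ω})).toReal

/-- `b_1(s) = Σ_{|X|=k} Σ_{Y ∈ I(X)} p_X p_Y`. -/
def b1 [MeasurableSpace Ω] (μ : Measure Ω) {n t : ℕ} (A : Fin t → Fin n → Ω → Bool)
    (k s : ℕ) : ℝ :=
  ∑ X ∈ Finset.univ.powersetCard k,
    ∑ Y ∈ (Finset.univ.powersetCard k).filter (fun Y => Y ∩ X ≠ ∅),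
      pX μ A s X * pX μ A s Y

/-- `b_2(s) = Σ_{|X|=k} Σ_{X ≠ Y ∈ I(X)} E[Z_X Z_Y]`. -/
def b2 [MeasurableSpace Ω] (μ : Measure Ω) {n t : ℕ} (A : Fin t → Fin n → Ω → Bool)
    (k s : ℕ) : ℝ :=
  ∑ X ∈ Finset.univ.powersetCard k,
    ∑ Y ∈ (Finset.univ.powersetCard k).filter (fun Y => Y ∩ X ≠ ∅ ∧ Y ≠ X),
      pXY μ A s X Y

/-- Probability that a Poisson random variable with mean `lam` lands in `S ⊆ ℕ`. -/
def poissonProb (lam : ℝ) (S : Set ℕ) : ℝ :=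
  ∑' j : S, Real.exp (-lam) * lam ^ (j : ℕ) / (Nat.factorial (j : ℕ) : ℝ)

open scoped ENNReal

theorem card_product_union_product_add {α β : Type*} [DecidableEq α] [DecidableEq β]
    (S T : Finset α) (X Y : Finset β) :
    #(S ×ˢ X ∪ T ×ˢ Y) + #(S ∩ T) * #(X ∩ Y) = #S * #X + #T * #Y := by
  rw [← card_product, ← product_inter_product, card_union_add_card_inter, card_product,
    card_product]

theorem card_inter_mem_Icc {α : Type*} [DecidableEq α] {X Y : Finset α} {k : ℕ}
    (hX : #X = k) (hY : #Y = k) (hXY : Y ∩ X ≠ ∅) (hne : Y ≠ X) : #(X ∩ Y) ∈ Icc 1 (k - 1) := by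
  have hpos : 0 < #(X ∩ Y) := card_pos.2 (nonempty_iff_ne_empty.2 (inter_comm X Y ▸ hXY))
  have hlt : #(X ∩ Y) < #X := by
    refine card_lt_card (ssubset_of_subset_of_ne inter_subset_left fun h => hne ?_)
    exact (eq_of_subset_of_card_le (h ▸ inter_subset_right) (by omega)).symm
  exact mem_Icc.2 ⟨hpos, by omega⟩

theorem card_filter_card_inter_eq_le {α : Type*} [Fintype α] [DecidableEq α]
    {B : Finset (Finset α)} {k : ℕ} (hB : ∀ Y ∈ B, #Y = k) (X : Finset α) (i : ℕ) :
    #{Y ∈ B | #(X ∩ Y) = i} ≤ 2 ^ #X * Fintype.card α ^ (k - i) := by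
  calc #{Y ∈ B | #(X ∩ Y) = i}
      ≤ #(X.powerset ×ˢ (univ : Finset α).powersetCard (k - i)) := by
        refine card_le_card_of_injOn (fun Y => (X ∩ Y, Y \ X)) (fun Y hY => ?_)
          (fun Y _ Z _ h => ?_)
        · obtain ⟨hYB, hi⟩ := mem_filter.1 hY
          have := card_inter_add_card_sdiff Y X
          rw [inter_comm] at hi
          exact mem_product.2 ⟨mem_powerset.2 inter_subset_left,
            mem_powersetCard.2 ⟨subset_univ _, (by have := hB Y hYB; omega : #(Y \ X) = k - i)⟩⟩
        · obtain ⟨h₁, h₂⟩ := Prod.mk.inj h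
          rw [← sdiff_union_inter Y X, ← sdiff_union_inter Z X, inter_comm Y, inter_comm Z, h₁, h₂]
    _ ≤ 2 ^ #X * Fintype.card α ^ (k - i) := by
        rw [card_product, card_powerset, card_powersetCard, card_univ]
        exact Nat.mul_le_mul_left _ (Nat.choose_le_pow _ _)

theorem sum_le_sum_card_inter {α : Type*} [Fintype α] [DecidableEq α]
    {B : Finset (Finset α)} {k : ℕ} (hB : ∀ Y ∈ B, #Y = k) (X : Finset α) {I : Finset ℕ}
    (hI : ∀ Y ∈ B, #(X ∩ Y) ∈ I) {f : ℕ → ℝ} (hf : ∀ i ∈ I, 0 ≤ f i) :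
    ∑ Y ∈ B, f #(X ∩ Y) ≤ ∑ i ∈ I, 2 ^ #X * (Fintype.card α : ℝ) ^ (k - i) * f i := by
  rw [← sum_fiberwise_of_maps_to hI]
  refine sum_le_sum fun i hi => ?_
  rw [sum_congr rfl fun Y hY => by rw [(mem_filter.1 hY).2], sum_const, nsmul_eq_mul]
  gcongr
  · exact hf i hi
  · exact_mod_cast card_filter_card_inter_eq_le hB X i

theorem measure_biInter_eq_pow {ι : Type*} [MeasurableSpace Ω] {μ : Measure Ω}
    {f : ι → Ω → Bool} (hf : iIndepFun f μ) {q : ℝ≥0∞}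
    (hq : ∀ i, μ {ω | f i ω = true} = q) (D : Finset ι) :
    μ (⋂ i ∈ D, {ω | f i ω = true}) = q ^ #D := by
  rw [hf.meas_biInter (s := fun i => {ω | f i ω = true})
    fun i _ => ⟨{true}, measurableSet_singleton true, rfl⟩]
  simp [hq]

theorem setOf_le_support_subset {n t : ℕ} (A : Fin t → Fin n → Ω → Bool)
    (X : Finset (Fin n)) (s : ℕ) :
    {ω | s ≤ support A X ω} ⊆
      ⋃ S ∈ (univ : Finset (Fin t)).powersetCard s, ⋂ p ∈ S ×ˢ X, {ω | A p.1 p.2 ω = true} := by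
  intro ω hω
  obtain ⟨S, hS, rfl⟩ := exists_subset_card_eq hω
  refine Set.mem_biUnion (mem_powersetCard.2 ⟨subset_univ S, rfl⟩) (Set.mem_iInter₂.2 ?_)
  intro p hp
  exact (mem_filter.1 (hS (mem_product.1 hp).1)).2 p.2 (mem_product.1 hp).2

theorem b1_nonneg [MeasurableSpace Ω] (μ : Measure Ω) {n t : ℕ} (A : Fin t → Fin n → Ω → Bool)
    (k s : ℕ) : 0 ≤ b1 μ A k s :=
  sum_nonneg fun _ _ => sum_nonneg fun _ _ => mul_nonneg ENNReal.toReal_nonneg ENNReal.toReal_nonneg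

theorem b2_nonneg [MeasurableSpace Ω] (μ : Measure Ω) {n t : ℕ} (A : Fin t → Fin n → Ω → Bool)
    (k s : ℕ) : 0 ≤ b2 μ A k s :=
  sum_nonneg fun _ _ => sum_nonneg fun _ _ => ENNReal.toReal_nonneg

def overlapTerm (N T q : ℝ) (k s i r : ℕ) : ℝ :=
  N ^ (2 * k - i) * T ^ (2 * s - r) * q ^ (2 * (s * k) - r * i)

section Bounds

variable [MeasurableSpace Ω] {μ : Measure Ω} {n t : ℕ} {A : Fin t → Fin n → Ω → Bool}
  {q : ℝ} (hindep : iIndepFun (fun p : Fin t × Fin n => A p.1 p.2) μ) (hq0 : 0 ≤ q)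
  (hq : ∀ j i, μ {ω | A j i ω = true} = ENNReal.ofReal q)
include hindep hq0 hq

theorem pX_le (s : ℕ) (X : Finset (Fin n)) :
    pX μ A s X ≤ t.choose s * q ^ (s * #X) := by
  refine ENNReal.toReal_le_of_le_ofReal (by positivity) ?_
  calc μ {ω | s ≤ support A X ω}
      ≤ ∑ S ∈ (univ : Finset (Fin t)).powersetCard s,
          μ (⋂ p ∈ S ×ˢ X, {ω | A p.1 p.2 ω = true}) :=
        (measure_mono (setOf_le_support_subset A X s)).trans (measure_biUnion_finset_le _ _)
    _ = ENNReal.ofReal (t.choose s * q ^ (s * #X)) := by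
        rw [sum_congr rfl fun S hS => by
          rw [measure_biInter_eq_pow hindep (fun p => hq p.1 p.2), card_product,
            (mem_powersetCard.1 hS).2]]
        simp [ENNReal.ofReal_mul, ENNReal.ofReal_pow hq0]

theorem pXY_le (s : ℕ) (X Y : Finset (Fin n)) :
    pXY μ A s X Y ≤ ∑ S ∈ (univ : Finset (Fin t)).powersetCard s,
      ∑ T ∈ (univ : Finset (Fin t)).powersetCard s, q ^ #(S ×ˢ X ∪ T ×ˢ Y) := by
  set P := (univ : Finset (Fin t)).powersetCard s
  have hsub : {ω | s ≤ support A X ω} ∩ {ω | s ≤ support A Y ω} ⊆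
      ⋃ S ∈ P, ⋃ T ∈ P, ⋂ p ∈ S ×ˢ X ∪ T ×ˢ Y, {ω | A p.1 p.2 ω = true} := by
    rintro ω ⟨hX, hY⟩
    obtain ⟨S, hS, hSω⟩ := Set.mem_iUnion₂.1 (setOf_le_support_subset A X s hX)
    obtain ⟨T, hT, hTω⟩ := Set.mem_iUnion₂.1 (setOf_le_support_subset A Y s hY)
    exact Set.mem_biUnion hS <| Set.mem_biUnion hT <| by
      rw [set_biInter_inter]; exact ⟨hSω, hTω⟩
  refine ENNReal.toReal_le_of_le_ofReal (by positivity) ?_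
  calc μ ({ω | s ≤ support A X ω} ∩ {ω | s ≤ support A Y ω})
      ≤ ∑ S ∈ P, ∑ T ∈ P, μ (⋂ p ∈ S ×ˢ X ∪ T ×ˢ Y, {ω | A p.1 p.2 ω = true}) :=
        (measure_mono hsub).trans <| (measure_biUnion_finset_le _ _).trans <|
          sum_le_sum fun S _ => measure_biUnion_finset_le _ _
    _ = ENNReal.ofReal (∑ S ∈ P, ∑ T ∈ P, q ^ #(S ×ˢ X ∪ T ×ˢ Y)) := by
        simp_rw [measure_biInter_eq_pow hindep (fun p => hq p.1 p.2), ← ENNReal.ofReal_pow hq0]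
        rw [ENNReal.ofReal_sum_of_nonneg fun S _ => by positivity]
        exact sum_congr rfl fun S _ => (ENNReal.ofReal_sum_of_nonneg fun T _ => by positivity).symm

theorem pXY_le_sum_range {k s : ℕ} {X Y : Finset (Fin n)} (hX : #X = k) (hY : #Y = k) :
    pXY μ A s X Y ≤
      ∑ r ∈ range (s + 1), 2 ^ s * (t : ℝ) ^ (2 * s - r) * q ^ (2 * (s * k) - r * #(X ∩ Y)) := by
  set P := (univ : Finset (Fin t)).powersetCard s
  have hP : ∀ S ∈ P, #S = s := fun S hS => (mem_powersetCard.1 hS).2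
  set f : ℕ → ℝ := fun r => q ^ (2 * (s * k) - r * #(X ∩ Y))
  calc pXY μ A s X Y
      ≤ ∑ S ∈ P, ∑ T ∈ P, f #(S ∩ T) := by
        refine (pXY_le hindep hq0 hq s X Y).trans_eq (sum_congr rfl fun S hS =>
          sum_congr rfl fun T hT => ?_)
        have := card_product_union_product_add S T X Y
        rw [hP S hS, hP T hT, hX, hY] at this
        simp only [f]
        congr 1
        omega
    _ ≤ ∑ S ∈ P, ∑ r ∈ range (s + 1), 2 ^ s * (t : ℝ) ^ (s - r) * f r := by
        refine sum_le_sum fun S hS => ?_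
        have hI : ∀ T ∈ P, #(S ∩ T) ∈ range (s + 1) := fun T _ =>
          mem_range_succ_iff.2 (hP S hS ▸ card_le_card inter_subset_left)
        simpa [hP S hS] using sum_le_sum_card_inter hP S hI fun r _ => by positivity
    _ ≤ ∑ r ∈ range (s + 1), 2 ^ s * (t : ℝ) ^ (2 * s - r) * f r := by
        rw [sum_const, nsmul_eq_mul, mul_sum, card_powersetCard, card_univ, Fintype.card_fin]
        refine sum_le_sum fun r hr => ?_
        have hr : r ≤ s := mem_range_succ_iff.1 hr
        rw [show 2 * s - r = s + (s - r) by omega, pow_add]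
        have : ((t.choose s : ℕ) : ℝ) ≤ (t : ℝ) ^ s := by exact_mod_cast t.choose_le_pow s
        calc ((t.choose s : ℕ) : ℝ) * (2 ^ s * (t : ℝ) ^ (s - r) * f r)
            ≤ (t : ℝ) ^ s * (2 ^ s * (t : ℝ) ^ (s - r) * f r) := by gcongr
          _ = 2 ^ s * ((t : ℝ) ^ s * (t : ℝ) ^ (s - r)) * f r := by ring

theorem b1_le (k s : ℕ) : b1 μ A k s ≤ overlapTerm n t q k s 0 0 := by
  set P := (univ : Finset (Fin n)).powersetCard k
  set β : ℝ := (t : ℝ) ^ s * q ^ (s * k)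
  have hpX : ∀ X ∈ P, pX μ A s X ≤ β := fun X hX => by
    refine (pX_le hindep hq0 hq s X).trans ?_
    rw [(mem_powersetCard.1 hX).2]
    exact mul_le_mul_of_nonneg_right (by exact_mod_cast t.choose_le_pow s) (by positivity)
  calc b1 μ A k s ≤ ∑ X ∈ P, ∑ Y ∈ P, β * β := by
        refine sum_le_sum fun X hX => ?_
        refine (sum_le_sum fun Y hY => mul_le_mul (hpX X hX) (hpX Y (mem_filter.1 hY).1)
          ENNReal.toReal_nonneg (by positivity)).trans ?_
        exact sum_le_sum_of_subset_of_nonneg (filter_subset _ _) fun _ _ _ => by positivity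
    _ = ((n.choose k : ℕ) : ℝ) ^ 2 * β ^ 2 := by
        simp only [sum_const, P, card_powersetCard, card_univ, Fintype.card_fin, nsmul_eq_mul]
        ring
    _ ≤ ((n : ℝ) ^ k) ^ 2 * β ^ 2 := by
        gcongr
        exact_mod_cast n.choose_le_pow k
    _ = overlapTerm n t q k s 0 0 := by
        simp only [overlapTerm, β, Nat.sub_zero, zero_mul]
        ring

theorem b2_le (k s : ℕ) : b2 μ A k s ≤
    ∑ i ∈ Icc 1 (k - 1), ∑ r ∈ range (s + 1), 2 ^ (k + s) * overlapTerm n t q k s i r := by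
  set P := (univ : Finset (Fin n)).powersetCard k
  have hP : ∀ X ∈ P, #X = k := fun X hX => (mem_powersetCard.1 hX).2
  set g : ℕ → ℝ := fun i =>
    ∑ r ∈ range (s + 1), 2 ^ s * (t : ℝ) ^ (2 * s - r) * q ^ (2 * (s * k) - r * i)
  calc b2 μ A k s
      ≤ ∑ X ∈ P, ∑ Y ∈ P with Y ∩ X ≠ ∅ ∧ Y ≠ X, g #(X ∩ Y) :=
        sum_le_sum fun X hX => sum_le_sum fun Y hY =>
          pXY_le_sum_range hindep hq0 hq (hP X hX) (hP Y (mem_filter.1 hY).1)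
    _ ≤ ∑ X ∈ P, ∑ i ∈ Icc 1 (k - 1), 2 ^ k * (n : ℝ) ^ (k - i) * g i := by
        refine sum_le_sum fun X hX => ?_
        have hI : ∀ Y ∈ P.filter (fun Y => Y ∩ X ≠ ∅ ∧ Y ≠ X), #(X ∩ Y) ∈ Icc 1 (k - 1) :=
          fun Y hY => card_inter_mem_Icc (hP X hX) (hP Y (mem_filter.1 hY).1)
            (mem_filter.1 hY).2.1 (mem_filter.1 hY).2.2
        simpa [hP X hX] using sum_le_sum_card_inter (fun Y hY => hP Y (mem_filter.1 hY).1) X hI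
          fun i _ => by positivity
    _ ≤ ∑ i ∈ Icc 1 (k - 1), ∑ r ∈ range (s + 1), 2 ^ (k + s) * overlapTerm n t q k s i r := by
        rw [sum_const, nsmul_eq_mul, mul_sum, card_powersetCard, card_univ, Fintype.card_fin]
        refine sum_le_sum fun i hi => ?_
        have hi : i ≤ k := by have := (mem_Icc.1 hi).2; omega
        have : ((n.choose k : ℕ) : ℝ) ≤ (n : ℝ) ^ k := by exact_mod_cast n.choose_le_pow k
        calc ((n.choose k : ℕ) : ℝ) * (2 ^ k * (n : ℝ) ^ (k - i) * g i)
            ≤ (n : ℝ) ^ k * (2 ^ k * (n : ℝ) ^ (k - i) * g i) := by gcongr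
          _ = ∑ r ∈ range (s + 1), 2 ^ (k + s) * overlapTerm n t q k s i r := by
            rw [mul_sum]
            simp only [overlapTerm, mul_sum, show 2 * k - i = k + (k - i) by omega, pow_add]
            refine sum_congr rfl fun r _ => ?_
            ring

end Bounds

theorem overlap_exponent_le {k s i r : ℕ} {c : ℝ} (hs : 0 < s)
    (hc : c ≤ ((k : ℝ) - 1) * (1 - 1 / (s : ℝ))) (hi : i < k) (hr : r ≤ s) :
    (2 * k - i : ℝ) + c * (2 * s - r) - (2 * (s * k) - r * i) ≤ 2 - 2 * s := by
  have hs' : (0 : ℝ) < s := by exact_mod_cast hs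
  have hs1 : (1 : ℝ) ≤ s := by exact_mod_cast hs
  have hcs : c * s ≤ ((k : ℝ) - 1) * (s - 1) :=
    calc c * s ≤ ((k : ℝ) - 1) * (1 - 1 / s) * s := mul_le_mul_of_nonneg_right hc hs'.le
      _ = ((k : ℝ) - 1) * (s - 1) := by field_simp
  have hi' : (i : ℝ) + 1 ≤ k := by exact_mod_cast hi
  have hr' : (r : ℝ) ≤ s := by exact_mod_cast hr
  have h2sr : c * s * (2 * s - r) ≤ ((k : ℝ) - 1) * (s - 1) * (2 * s - r) :=
    mul_le_mul_of_nonneg_right hcs (by linarith)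
  -- after multiplying by `s`, the claim reduces to `s i (r - 1) ≤ r (s - 1) (k - 1)`
  have h₁ : 0 ≤ (r : ℝ) * (s - 1) * (k - 1 - i) :=
    mul_nonneg (mul_nonneg r.cast_nonneg (by linarith)) (by linarith)
  have h₂ : 0 ≤ (i : ℝ) * (s - r) := mul_nonneg i.cast_nonneg (by linarith)
  refine le_of_mul_le_mul_right ?_ hs'
  nlinarith

theorem overlapTerm_le {k s i r : ℕ} {c C γ N T : ℝ} (hs : 0 < s)
    (hc : c ≤ ((k : ℝ) - 1) * (1 - 1 / (s : ℝ))) (hi : i < k) (hr : r ≤ s) (hγ : 0 ≤ γ)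
    (hN : 1 ≤ N) (hT0 : 0 ≤ T) (hT : T ≤ C * N ^ c) :
    overlapTerm N T (γ / N) k s i r ≤
      C ^ (2 * s - r) * γ ^ (2 * (s * k) - r * i) * (1 / N ^ (2 * s - 2)) := by
  have hN0 : 0 < N := one_pos.trans_le hN
  have hC : 0 ≤ C := nonneg_of_mul_nonneg_left (hT0.trans hT) (Real.rpow_pos_of_pos hN0 c)
  have hri : r * i ≤ 2 * (s * k) := by nlinarith
  calc overlapTerm N T (γ / N) k s i r
      ≤ N ^ (2 * k - i) * (C * N ^ c) ^ (2 * s - r) * (γ / N) ^ (2 * (s * k) - r * i) := by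
        unfold overlapTerm; gcongr
    _ = C ^ (2 * s - r) * γ ^ (2 * (s * k) - r * i) *
          N ^ (((2 * k - i : ℕ) : ℝ) + c * (2 * s - r : ℕ) - (2 * (s * k) - r * i : ℕ)) := by
        rw [Real.rpow_sub hN0, Real.rpow_add hN0, Real.rpow_mul hN0.le]
        simp only [Real.rpow_natCast, div_pow, mul_pow]
        ring
    _ ≤ C ^ (2 * s - r) * γ ^ (2 * (s * k) - r * i) * N ^ ((2 : ℝ) - 2 * s) := by
        refine mul_le_mul_of_nonneg_left (Real.rpow_le_rpow_of_exponent_le hN ?_) (by positivity)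
        push_cast [show i ≤ 2 * k by omega, show r ≤ 2 * s by omega, hri]
        exact overlap_exponent_le hs hc hi hr
    _ = C ^ (2 * s - r) * γ ^ (2 * (s * k) - r * i) * (1 / N ^ (2 * s - 2)) := by
        rw [one_div, ← Real.rpow_natCast N (2 * s - 2), ← Real.rpow_neg hN0.le]
        push_cast [show 2 ≤ 2 * s by omega]
        ring_nf

theorem overlapTerm_isBigO {k s i r : ℕ} {c γ : ℝ} {t : ℕ → ℕ} (hs : 0 < s)
    (hc : c ≤ ((k : ℝ) - 1) * (1 - 1 / (s : ℝ))) (hi : i < k) (hr : r ≤ s) (hγ : 0 ≤ γ)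
    (htO : (fun n => (t n : ℝ)) =O[atTop] fun n => (n : ℝ) ^ c) :
    (fun n : ℕ => overlapTerm n (t n) (γ / n) k s i r) =O[atTop]
      fun n => 1 / (n : ℝ) ^ (2 * s - 2) := by
  obtain ⟨C, hC⟩ := htO.bound
  refine IsBigO.of_bound (C ^ (2 * s - r) * γ ^ (2 * (s * k) - r * i)) ?_
  filter_upwards [hC, eventually_ge_atTop 1] with n htn hn
  have hN : (1 : ℝ) ≤ n := by exact_mod_cast hn
  rw [Real.norm_of_nonneg (by unfold overlapTerm; positivity),
    Real.norm_of_nonneg (by positivity)]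
  refine overlapTerm_le hs hc hi hr hγ hN (Nat.cast_nonneg _) ?_
  rwa [Real.norm_natCast, Real.norm_of_nonneg (by positivity)] at htn

theorem b1_add_b2_isBigO_fixed_p_general
    {k s : ℕ} (hk : 2 ≤ k) (hs : 2 ≤ s)
    (γ : ℝ) (hγ : 0 < γ)
    (c : ℝ) (hc : c ≤ ((k : ℝ) - 1) * (1 - 1 / (s : ℝ)))
    {Ω : ℕ → Type*} [∀ n, MeasurableSpace (Ω n)]
    (μ : ∀ n, Measure (Ω n))
    (t : ℕ → ℕ)
    (htO : (fun n => (t n : ℝ)) =O[atTop] fun n => (n : ℝ) ^ c)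
    (A : ∀ n, Fin (t n) → Fin n → Ω n → Bool)
    (hindep : ∀ n, iIndepFun
      (fun p : Fin (t n) × Fin n => A n p.1 p.2) (μ n))
    (hfreq : ∀ n : ℕ, γ ≤ n → ∀ j i,
      μ n {ω | A n j i ω = true} = ENNReal.ofReal (γ / n)) :
    (fun n => b1 (μ n) (A n) k s + b2 (μ n) (A n) k s)
      =O[atTop] fun n => 1 / (n : ℝ) ^ (2 * s - 2) := by
  have hterm : ∀ i < k, ∀ r ≤ s, (fun n : ℕ => overlapTerm n (t n) (γ / n) k s i r)
      =O[atTop] fun n => 1 / (n : ℝ) ^ (2 * s - 2) :=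
    fun i hi r hr => overlapTerm_isBigO (by omega) hc hi hr hγ.le htO
  have hlarge : ∀ᶠ n : ℕ in atTop, γ ≤ n :=
    (eventually_ge_atTop ⌈γ⌉₊).mono fun n hn => Nat.ceil_le.1 hn
  have hb1 : (fun n => b1 (μ n) (A n) k s)
      =O[atTop] fun n => overlapTerm n (t n) (γ / n) k s 0 0 :=
    .of_norm_eventuallyLE <| hlarge.mono fun n hn =>
      (Real.norm_of_nonneg (b1_nonneg _ _ k s)).trans_le
        (b1_le (hindep n) (by positivity) (hfreq n hn) k s)
  have hb2 : (fun n => b2 (μ n) (A n) k s) =O[atTop] fun n => ∑ i ∈ Icc 1 (k - 1),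
      ∑ r ∈ range (s + 1), 2 ^ (k + s) * overlapTerm n (t n) (γ / n) k s i r :=
    .of_norm_eventuallyLE <| hlarge.mono fun n hn =>
      (Real.norm_of_nonneg (b2_nonneg _ _ k s)).trans_le
        (b2_le (hindep n) (by positivity) (hfreq n hn) k s)
  refine (hb1.trans (hterm 0 (by omega) 0 s.zero_le)).add (hb2.trans ?_)
  refine IsBigO.fun_sum fun i hi => IsBigO.fun_sum fun r hr => (hterm i ?_ r ?_).const_mul_left _
  · have := (mem_Icc.1 hi).2; omega
  · exact mem_range_succ_iff.1 hr

/-- **`b₁(s) + b₂(s) = O(1/n^{2s−2})` in the fixed-`p` model.**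
Fix `k, s ≥ 2`, `γ > 0` and `0 < c ≤ (k−1)(1−1/s)`; consider for each `n` the random dataset
model with common item probability `p = γ/n` and `t(n) = O(n^c)` transactions. Then, as
`n → ∞`, `b₁(s) + b₂(s) = O(1/n^{2s−2})`. -/
theorem b1_add_b2_isBigO_fixed_p
    {k s : ℕ} (hk : 2 ≤ k) (hs : 2 ≤ s)
    (γ : ℝ) (hγ : 0 < γ)
    (c : ℝ) (hc0 : 0 < c) (hc : c ≤ ((k : ℝ) - 1) * (1 - 1 / (s : ℝ)))
    {Ω : ℕ → Type*} [∀ n, MeasurableSpace (Ω n)]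
    (μ : ∀ n, Measure (Ω n)) [∀ n, IsProbabilityMeasure (μ n)]
    (t : ℕ → ℕ)
    (htO : (fun n => (t n : ℝ)) =O[atTop] fun n => (n : ℝ) ^ c)
    (A : ∀ n, Fin (t n) → Fin n → Ω n → Bool)
    (hmeas : ∀ n j i, Measurable (A n j i))
    (hindep : ∀ n, iIndepFun
      (fun p : Fin (t n) × Fin n => A n p.1 p.2) (μ n))
    (hfreq : ∀ n : ℕ, γ ≤ n → ∀ j i,
      μ n {ω | A n j i ω = true} = ENNReal.ofReal (γ / n)) :
    (fun n => b1 (μ n) (A n) k s + b2 (μ n) (A n) k s)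
      =O[atTop] fun n => 1 / (n : ℝ) ^ (2 * s - 2) :=
  b1_add_b2_isBigO_fixed_p_general hk hs γ hγ c hc μ t htO A hindep hfreq

end PaperModel
end
end
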